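/- arXiv:1603.01421 — 5 statements merged into one kernel-verified Lean document; each statement's English description precedes it below -/
import Mathlib

section
/- Let (X, ℬ, μ) be a probability space, f: X → X an invertible measure-preserving transformation, 𝒜 a measurable cocycle over f with generator A, and Λ ⊆ X an f-invariant set. Let E(x), F(x) ⊆ ℝ^d, x ∈ Λ, be 𝒜-invariant families of subspaces (i.e. A(x)E(x) ⊆ E(f(x)) and A(x)F(x) ⊆ F(f(x))) such that there exist λ₁ < λ₂, ε > 0 and measurable functions C, C̃: Λ → (0,∞) with: (1) λ₁ + 3ε ≤ λ₂ − 2ε; (2) E(x) ∩ F(x) = {0} for x ∈ Λ; (3) ‖𝒜(x,n)v‖ ≤ C̃(x)e^{(λ₂+ε)n}‖v‖ for all x ∈ Λ, v ∈ E(x) ⊕ F(x), n ≥ 0; (4) ‖𝒜(x,n)v‖ ≥ (1/C(x))e^{(λ₂−ε)n}‖v‖ for all x ∈ Λ, v ∈ F(x), n ≥ 0; (5) ‖𝒜(x,n)v‖ ≤ C(x)e^{(λ₁+ε)n}‖v‖ for all x ∈ Λ, v ∈ E(x), n ≥ 0; (6) C̃(f^m(x)) ≤ C̃(x)e^{ε|m|}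 and C(f^m(x)) ≤ C(x)e^{ε|m|} for all x ∈ Λ, m ∈ ℤ. Then there exists a measurable function K: Λ → (0,∞) satisfying K(f^m(x)) ≤ K(x)e^{5ε|m|} for all x ∈ Λ, m ∈ ℤ, and such that ‖v₁‖ ≤ K(x)‖v₁ + v₂‖ and ‖v₂‖ ≤ K(x)‖v₁ + v₂‖ for every x ∈ Λ, v₁ ∈ E(x) and v₂ ∈ F(x). -/
/-!
Push `v₁ + v₂` forward for `n` steps. Along `F` the cocycle expands at least like
`C⁻¹ e^{(λ₂-ε)n}`, along `E` at most like `C e^{(λ₁+ε)n}`; as soon as `e^{3εn} ≥ 2C²` the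
`E`-part can cancel at most half of the `F`-part, so `‖v₂‖` is bounded by `‖v₁ + v₂‖` times
roughly the ratio `C C̃ e^{2εn}` of the upper rate on `E ⊕ F` to the lower rate on `F`.
For the least such `n` one has `e^{2εn} ≤ max(1, 2C²) e^{3ε}`, and the resulting constant
`K = 2 C C̃ max(1, 2C²) e^{3ε} + 2` is `4ε`-tempered because `C` and `C̃` are `ε`-tempered.
-/

open Filter MeasureTheory Set

noncomputable section

theorem exists_nat_le_exp_mul_le {δ : ℝ} (hδ : 0 < δ) (a : ℝ) :
    ∃ n : ℕ, a ≤ Real.exp (δ * n) ∧ Real.exp (δ * n) ≤ max 1 a * Real.exp δ := by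
  set b := max 1 a
  have hb : 0 < b := lt_of_lt_of_le one_pos (le_max_left _ _)
  have hlog : 0 ≤ Real.log b / δ := div_nonneg (Real.log_nonneg (le_max_left _ _)) hδ.le
  refine ⟨⌈Real.log b / δ⌉₊, ?_, ?_⟩
  · have : Real.log b ≤ δ * ⌈Real.log b / δ⌉₊ := by
      rw [mul_comm, ← div_le_iff₀ hδ]; exact Nat.le_ceil _
    calc a ≤ b := le_max_right _ _
      _ = Real.exp (Real.log b) := (Real.exp_log hb).symm
      _ ≤ _ := Real.exp_le_exp.2 this
  · have : δ * ⌈Real.log b / δ⌉₊ ≤ Real.log b + δ := by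
      have h := mul_lt_mul_of_pos_left (Nat.ceil_lt_add_one hlog) hδ
      rw [mul_add, mul_div_cancel₀ _ hδ.ne', mul_one] at h
      exact h.le
    calc Real.exp (δ * ⌈Real.log b / δ⌉₊) ≤ Real.exp (Real.log b + δ) := Real.exp_le_exp.2 this
      _ = b * Real.exp δ := by rw [Real.exp_add, Real.exp_log hb]

theorem mul_norm_le_of_growth_gap {V W 𝓕 : Type*} [SeminormedAddCommGroup V]
    [SeminormedAddCommGroup W] [FunLike 𝓕 V W] [AddHomClass 𝓕 V W] (T : 𝓕) {v₁ v₂ : V}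
    {a b s : ℝ} (hb₀ : 0 ≤ b) (hab : 2 * b ≤ a)
    (hsum : ‖T (v₁ + v₂)‖ ≤ s * ‖v₁ + v₂‖) (hv₁ : ‖T v₁‖ ≤ b * ‖v₁‖)
    (hv₂ : a * ‖v₂‖ ≤ ‖T v₂‖) :
    a * ‖v₂‖ ≤ (2 * s + a) * ‖v₁ + v₂‖ := by
  have hT : ‖T v₂‖ ≤ ‖T (v₁ + v₂)‖ + ‖T v₁‖ := by
    simpa [map_add] using norm_sub_le (T (v₁ + v₂)) (T v₁)
  have hv : ‖v₁‖ ≤ ‖v₁ + v₂‖ + ‖v₂‖ := by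
    simpa using norm_sub_le (v₁ + v₂) v₂
  have := mul_le_mul_of_nonneg_left hv hb₀
  nlinarith [mul_le_mul_of_nonneg_right hab (norm_nonneg (v₁ + v₂)),
    mul_le_mul_of_nonneg_right hab (norm_nonneg v₂)]

def splittingConstant (ε c t : ℝ) : ℝ :=
  2 * c * t * max 1 (2 * c ^ 2) * Real.exp (3 * ε) + 2

theorem splittingConstant_pos {ε c t : ℝ} (hc : 0 ≤ c) (ht : 0 ≤ t) :
    0 < splittingConstant ε c t := by
  unfold splittingConstant
  positivity

theorem measurable_splittingConstant {X : Type*} [MeasurableSpace X] {C Ct : X → ℝ}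
    (hC : Measurable C) (hCt : Measurable Ct) (ε : ℝ) :
    Measurable fun x => splittingConstant ε (C x) (Ct x) := by
  unfold splittingConstant
  fun_prop

theorem max_one_two_mul_sq_le {c c' a : ℝ} (ha : 0 ≤ a) (hc' : 0 ≤ c')
    (hc : c' ≤ c * Real.exp a) :
    max 1 (2 * c' ^ 2) ≤ max 1 (2 * c ^ 2) * Real.exp (2 * a) := by
  have hsq : 2 * c' ^ 2 ≤ 2 * c ^ 2 * Real.exp (2 * a) := by
    calc 2 * c' ^ 2 ≤ 2 * (c * Real.exp a) ^ 2 := by gcongr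
      _ = 2 * c ^ 2 * Real.exp (2 * a) := by
        rw [mul_pow, ← Real.exp_nat_mul]; push_cast; ring
  rw [max_mul_of_nonneg _ _ (Real.exp_pos _).le, one_mul]
  exact max_le_max (Real.one_le_exp (by positivity)) hsq

theorem splittingConstant_le_mul_exp {ε c t c' t' a : ℝ} (ha : 0 ≤ a) (hc' : 0 ≤ c')
    (ht' : 0 ≤ t') (hc : c' ≤ c * Real.exp a) (ht : t' ≤ t * Real.exp a) :
    splittingConstant ε c' t' ≤ splittingConstant ε c t * Real.exp (4 * a) := by
  have hc₀ : 0 ≤ c := nonneg_of_mul_nonneg_left (hc'.trans hc) (Real.exp_pos a)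
  have ht₀ : 0 ≤ t := nonneg_of_mul_nonneg_left (ht'.trans ht) (Real.exp_pos a)
  have hM := max_one_two_mul_sq_le ha hc' hc
  have hexp : Real.exp (4 * a) = Real.exp a * Real.exp a * Real.exp (2 * a) := by
    rw [← Real.exp_add, ← Real.exp_add]; ring_nf
  have h1 : 1 ≤ Real.exp (4 * a) := Real.one_le_exp (by positivity)
  unfold splittingConstant
  calc 2 * c' * t' * max 1 (2 * c' ^ 2) * Real.exp (3 * ε) + 2
      ≤ 2 * (c * Real.exp a) * (t * Real.exp a) * (max 1 (2 * c ^ 2) * Real.exp (2 * a))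
          * Real.exp (3 * ε) + 2 := by gcongr
    _ = 2 * c * t * max 1 (2 * c ^ 2) * Real.exp (3 * ε) * Real.exp (4 * a) + 2 := by
      rw [hexp]; ring
    _ ≤ _ := by
      have : 0 ≤ 2 * c * t * max 1 (2 * c ^ 2) * Real.exp (3 * ε) := by positivity
      nlinarith

theorem norm_le_splittingConstant_mul {V W 𝓕 : Type*} [SeminormedAddCommGroup V]
    [SeminormedAddCommGroup W] [FunLike 𝓕 V W] [AddHomClass 𝓕 V W] (T : ℕ → 𝓕)
    {lam₁ lam₂ ε c t : ℝ} (hε : 0 < ε) (hc : 0 < c) (ht : 0 ≤ t)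
    (hgap : lam₁ + 3 * ε ≤ lam₂ - 2 * ε) {v₁ v₂ : V}
    (hsum : ∀ n : ℕ, ‖T n (v₁ + v₂)‖ ≤ t * Real.exp ((lam₂ + ε) * n) * ‖v₁ + v₂‖)
    (hv₂ : ∀ n : ℕ, c⁻¹ * Real.exp ((lam₂ - ε) * n) * ‖v₂‖ ≤ ‖T n v₂‖)
    (hv₁ : ∀ n : ℕ, ‖T n v₁‖ ≤ c * Real.exp ((lam₁ + ε) * n) * ‖v₁‖) :
    ‖v₁‖ ≤ splittingConstant ε c t * ‖v₁ + v₂‖ ∧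
      ‖v₂‖ ≤ splittingConstant ε c t * ‖v₁ + v₂‖ := by
  obtain ⟨n, hn_lo, hn_hi⟩ := exists_nat_le_exp_mul_le (by positivity : 0 < 3 * ε) (2 * c ^ 2)
  set a := c⁻¹ * Real.exp ((lam₂ - ε) * n)
  set M := max 1 (2 * c ^ 2)
  have hgap_n : 2 * (c * Real.exp ((lam₁ + ε) * n)) ≤ a := by
    rw [le_inv_mul_iff₀ hc]
    calc c * (2 * (c * Real.exp ((lam₁ + ε) * n)))
        = 2 * c ^ 2 * Real.exp ((lam₁ + ε) * n) := by ring
      _ ≤ Real.exp (3 * ε * n) * Real.exp ((lam₁ + ε) * n) := by gcongr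
      _ ≤ Real.exp ((lam₂ - ε) * n) := by
        rw [← Real.exp_add]; gcongr; nlinarith [(Nat.cast_nonneg n : (0 : ℝ) ≤ n)]
  have hrate : 2 * (t * Real.exp ((lam₂ + ε) * n)) ≤ a * (2 * c * t * M * Real.exp (3 * ε)) := by
    have h2n : Real.exp (2 * ε * n) ≤ M * Real.exp (3 * ε) :=
      le_trans (Real.exp_le_exp.2 (by nlinarith [(Nat.cast_nonneg n : (0 : ℝ) ≤ n)])) hn_hi
    calc 2 * (t * Real.exp ((lam₂ + ε) * n))
        = 2 * t * Real.exp ((lam₂ - ε) * n) * Real.exp (2 * ε * n) := by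
          rw [mul_assoc, mul_assoc, ← Real.exp_add]; ring_nf
      _ ≤ 2 * t * Real.exp ((lam₂ - ε) * n) * (M * Real.exp (3 * ε)) := by gcongr
      _ = a * (2 * c * t * M * Real.exp (3 * ε)) := by
        simp only [a]; field_simp
  have hmain := mul_norm_le_of_growth_gap (T n) (by positivity) hgap_n (hsum n) (hv₁ n) (hv₂ n)
  have ha : 0 < a := by positivity
  have hv₂' : ‖v₂‖ ≤ (splittingConstant ε c t - 1) * ‖v₁ + v₂‖ := by
    have hK : 2 * (t * Real.exp ((lam₂ + ε) * n)) + a ≤ a * (splittingConstant ε c t - 1) := by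
      unfold splittingConstant; linarith
    refine le_of_mul_le_mul_left (hmain.trans ?_) ha
    exact (mul_le_mul_of_nonneg_right hK (norm_nonneg _)).trans_eq (mul_assoc _ _ _)
  have hv₁' : ‖v₁‖ ≤ ‖v₁ + v₂‖ + ‖v₂‖ := by simpa using norm_sub_le (v₁ + v₂) v₂
  constructor <;> nlinarith [norm_nonneg (v₁ + v₂)]

theorem angle_bound_of_splitting_general {X : Type*} [MeasurableSpace X] {d : ℕ}
    (f finv : X → X)
    (𝓐 : X → ℕ → EuclideanSpace ℝ (Fin d) →L[ℝ] EuclideanSpace ℝ (Fin d))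
    (Λ : Set X) (hΛf : MapsTo f Λ Λ) (hΛfinv : MapsTo finv Λ Λ)
    (E F : X → Submodule ℝ (EuclideanSpace ℝ (Fin d)))
    (lam₁ lam₂ ε : ℝ) (hε : 0 < ε)
    (C Ct : X → ℝ) (hCmeas : Measurable C) (hCtmeas : Measurable Ct)
    (hCpos : ∀ x ∈ Λ, 0 < C x) (hCtpos : ∀ x ∈ Λ, 0 < Ct x)
    -- (1)
    (hgap : lam₁ + 3 * ε ≤ lam₂ - 2 * ε)
    -- (3)
    (hupper : ∀ x ∈ Λ, ∀ v ∈ E x ⊔ F x, ∀ n : ℕ,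
      ‖𝓐 x n v‖ ≤ Ct x * Real.exp ((lam₂ + ε) * n) * ‖v‖)
    -- (4)
    (hlowerF : ∀ x ∈ Λ, ∀ v ∈ F x, ∀ n : ℕ,
      ‖𝓐 x n v‖ ≥ (C x)⁻¹ * Real.exp ((lam₂ - ε) * n) * ‖v‖)
    -- (5)
    (hupperE : ∀ x ∈ Λ, ∀ v ∈ E x, ∀ n : ℕ,
      ‖𝓐 x n v‖ ≤ C x * Real.exp ((lam₁ + ε) * n) * ‖v‖)
    -- (6)
    (htemp : ∀ x ∈ Λ, ∀ m : ℕ,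
      Ct (f^[m] x) ≤ Ct x * Real.exp (ε * m) ∧
      Ct (finv^[m] x) ≤ Ct x * Real.exp (ε * m) ∧
      C (f^[m] x) ≤ C x * Real.exp (ε * m) ∧
      C (finv^[m] x) ≤ C x * Real.exp (ε * m)) :
    ∃ K : X → ℝ, Measurable K ∧ (∀ x ∈ Λ, 0 < K x) ∧
      (∀ x ∈ Λ, ∀ m : ℕ,
        K (f^[m] x) ≤ K x * Real.exp (5 * ε * m) ∧
        K (finv^[m] x) ≤ K x * Real.exp (5 * ε * m)) ∧
      ∀ x ∈ Λ, ∀ v₁ ∈ E x, ∀ v₂ ∈ F x,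
        ‖v₁‖ ≤ K x * ‖v₁ + v₂‖ ∧ ‖v₂‖ ≤ K x * ‖v₁ + v₂‖ := by
  set K := fun x => splittingConstant ε (C x) (Ct x)
  have hK_pos : ∀ x ∈ Λ, 0 < K x := fun x hx =>
    splittingConstant_pos (hCpos x hx).le (hCtpos x hx).le
  have hK_temp : ∀ x ∈ Λ, ∀ y ∈ Λ, ∀ m : ℕ, Ct y ≤ Ct x * Real.exp (ε * m) →
      C y ≤ C x * Real.exp (ε * m) → K y ≤ K x * Real.exp (5 * ε * m) := by
    intro x hx y hy m hCt hC
    refine (splittingConstant_le_mul_exp (by positivity) (hCpos y hy).le (hCtpos y hy).le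
      hC hCt).trans ?_
    have : 4 * (ε * m) ≤ 5 * ε * m := by nlinarith [(Nat.cast_nonneg m : (0 : ℝ) ≤ m)]
    exact mul_le_mul_of_nonneg_left (Real.exp_le_exp.2 this) (hK_pos x hx).le
  refine ⟨K, measurable_splittingConstant hCmeas hCtmeas ε, hK_pos, fun x hx m => ?_, ?_⟩
  · obtain ⟨hCtf, hCtfinv, hCf, hCfinv⟩ := htemp x hx m
    exact ⟨hK_temp x hx _ (hΛf.iterate m hx) m hCtf hCf,
      hK_temp x hx _ (hΛfinv.iterate m hx) m hCtfinv hCfinv⟩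
  · intro x hx v₁ hv₁ v₂ hv₂
    exact norm_le_splittingConstant_mul (𝓐 x) hε (hCpos x hx) (hCtpos x hx).le hgap
      (hupper x hx _ (add_mem (Submodule.mem_sup_left hv₁) (Submodule.mem_sup_right hv₂)))
      (hlowerF x hx v₂ hv₂) (hupperE x hx v₁ hv₁)

/-- Lemma 2.1 of the paper.  Let `(X, ℬ, μ)` be a probability space, `f` an invertible
measure-preserving transformation (with inverse `finv`), `𝓐` a measurable cocycle over
`f` and `Λ` an `f`-invariant set.  Let `E(x), F(x) ⊆ ℝ^d`, `x ∈ Λ`, be `𝓐`-invariant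
families of subspaces such that there are `λ₁ < λ₂`, `ε > 0` and measurable positive
functions `C, C̃` on `Λ` satisfying the growth conditions (1)–(6).  Then there is a
measurable function `K : Λ → (0, ∞)` with `K(fᵐ(x)) ≤ K(x)e^{5ε|m|}` for `x ∈ Λ`,
`m ∈ ℤ`, and `‖v₁‖ ≤ K(x)‖v₁+v₂‖`, `‖v₂‖ ≤ K(x)‖v₁+v₂‖` for `v₁ ∈ E(x)`, `v₂ ∈ F(x)`. -/
theorem angle_bound_of_splitting {X : Type*} [MeasurableSpace X]
    (μ : Measure X) [IsProbabilityMeasure μ] {d : ℕ}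
    (f finv : X → X) (hf : MeasureTheory.MeasurePreserving f μ μ)
    (hmf : Measurable f) (hmfinv : Measurable finv)
    (hleft : Function.LeftInverse finv f) (hright : Function.RightInverse finv f)
    (𝓐 : X → ℕ → EuclideanSpace ℝ (Fin d) →L[ℝ] EuclideanSpace ℝ (Fin d))
    (h𝓐meas : ∀ (n : ℕ) (v : EuclideanSpace ℝ (Fin d)), Measurable fun x => 𝓐 x n v)
    (h𝓐0 : ∀ x, 𝓐 x 0 = ContinuousLinearMap.id ℝ (EuclideanSpace ℝ (Fin d)))
    (h𝓐coc : ∀ x n m, 𝓐 x (n + m) = (𝓐 (f^[n] x) m).comp (𝓐 x n))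
    (Λ : Set X) (hΛf : MapsTo f Λ Λ) (hΛfinv : MapsTo finv Λ Λ)
    (E F : X → Submodule ℝ (EuclideanSpace ℝ (Fin d)))
    (hEinv : ∀ x ∈ Λ, Submodule.map (𝓐 x 1 : EuclideanSpace ℝ (Fin d) →ₗ[ℝ] EuclideanSpace ℝ (Fin d)) (E x) ≤ E (f x))
    (hFinv : ∀ x ∈ Λ, Submodule.map (𝓐 x 1 : EuclideanSpace ℝ (Fin d) →ₗ[ℝ] EuclideanSpace ℝ (Fin d)) (F x) ≤ F (f x))
    (lam₁ lam₂ ε : ℝ) (hlam : lam₁ < lam₂) (hε : 0 < ε)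
    (C Ct : X → ℝ) (hCmeas : Measurable C) (hCtmeas : Measurable Ct)
    (hCpos : ∀ x ∈ Λ, 0 < C x) (hCtpos : ∀ x ∈ Λ, 0 < Ct x)
    -- (1)
    (hgap : lam₁ + 3 * ε ≤ lam₂ - 2 * ε)
    -- (2)
    (hEF : ∀ x ∈ Λ, E x ⊓ F x = ⊥)
    -- (3)
    (hupper : ∀ x ∈ Λ, ∀ v ∈ E x ⊔ F x, ∀ n : ℕ,
      ‖𝓐 x n v‖ ≤ Ct x * Real.exp ((lam₂ + ε) * n) * ‖v‖)
    -- (4)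
    (hlowerF : ∀ x ∈ Λ, ∀ v ∈ F x, ∀ n : ℕ,
      ‖𝓐 x n v‖ ≥ (C x)⁻¹ * Real.exp ((lam₂ - ε) * n) * ‖v‖)
    -- (5)
    (hupperE : ∀ x ∈ Λ, ∀ v ∈ E x, ∀ n : ℕ,
      ‖𝓐 x n v‖ ≤ C x * Real.exp ((lam₁ + ε) * n) * ‖v‖)
    -- (6)
    (htemp : ∀ x ∈ Λ, ∀ m : ℕ,
      Ct (f^[m] x) ≤ Ct x * Real.exp (ε * m) ∧
      Ct (finv^[m] x) ≤ Ct x * Real.exp (ε * m) ∧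
      C (f^[m] x) ≤ C x * Real.exp (ε * m) ∧
      C (finv^[m] x) ≤ C x * Real.exp (ε * m)) :
    ∃ K : X → ℝ, Measurable K ∧ (∀ x ∈ Λ, 0 < K x) ∧
      (∀ x ∈ Λ, ∀ m : ℕ,
        K (f^[m] x) ≤ K x * Real.exp (5 * ε * m) ∧
        K (finv^[m] x) ≤ K x * Real.exp (5 * ε * m)) ∧
      ∀ x ∈ Λ, ∀ v₁ ∈ E x, ∀ v₂ ∈ F x,
        ‖v₁‖ ≤ K x * ‖v₁ + v₂‖ ∧ ‖v₂‖ ≤ K x * ‖v₁ + v₂‖ :=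
  angle_bound_of_splitting_general f finv 𝓐 Λ hΛf hΛfinv E F lam₁ lam₂ ε hε C Ct hCmeas hCtmeas
    hCpos hCtpos hgap hupper hlowerF hupperE htemp
end
end

section
/- Let (X, ℬ, μ) be a probability space, f: X → X an invertible ergodic measure-preserving transformation, D: X → [1, ∞) a measurable function, and ψ: X → [0, ∞) an integrable function such that log D(x) − log D(f(x)) ≤ ψ(x) for μ-a.e. x ∈ X. Then lim_{n→∞} (1/n)·log D(f^n(x)) = 0 and lim_{n→∞} (1/n)·log D(f^{−n}(x)) = 0 for μ-a.e. x ∈ X. -/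
/-!
Write `g = log D` and `φ = g - g ∘ f`, so that `g (fⁿ x) = g x - Sₙ φ x` for the Birkhoff sums
`Sₙ`. If an integrable `χ ≥ φ` had `∫ χ < 0`, the upper half of the ergodic theorem would give
`Sₙ χ ≤ c n` with `c < 0`, hence `g (fⁿ x) → ∞` almost everywhere, which Poincaré recurrence
forbids. Applied to the truncations `max φ (-M)`, this shows that `φ` is integrable with
`∫ φ ≥ 0`; the ergodic theorem for `-φ` then gives `limsup g (fⁿ x) / n ≤ -∫ φ ≤ 0`, while
`g ≥ 0`. The inverse map is ergodic as well and `g - g ∘ f⁻¹ = -φ ∘ f⁻¹` is integrable, so the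
same argument runs backwards. The upper half of the ergodic theorem comes from Garsia's maximal
inequality.
-/

open Filter MeasureTheory Set Topology

theorem tendsto_div_natCast_zero_of_le_add_div {u : ℕ → ℝ} {a : ℝ} (hu : ∀ n, 0 ≤ u n)
    (h : ∀ k : ℕ, ∀ᶠ n in atTop, u n ≤ a + n / (k + 1)) :
    Tendsto (fun n => u n / n) atTop (𝓝 0) := by
  refine tendsto_order.2 ⟨fun b hb => Eventually.of_forall fun n =>
    hb.trans_le (div_nonneg (hu n) n.cast_nonneg), fun ε hε => ?_⟩
  obtain ⟨k, hk⟩ := exists_nat_one_div_lt (half_pos hε)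
  have ha : ∀ᶠ n : ℕ in atTop, a / n < ε / 2 :=
    (tendsto_const_div_atTop_nhds_zero_nat a).eventually (gt_mem_nhds (half_pos hε))
  filter_upwards [h k, ha, eventually_gt_atTop 0] with n hn han hn0
  have hn0' : (0 : ℝ) < n := Nat.cast_pos.2 hn0
  calc u n / n ≤ (a + n / (k + 1)) / n := div_le_div_of_nonneg_right hn hn0'.le
    _ = a / n + 1 / (k + 1) := by field_simp
    _ < ε / 2 + ε / 2 := add_lt_add han hk
    _ = ε := add_halves ε

section

variable {X : Type*}

theorem birkhoffSum_sub_comp {G : Type*} [AddCommGroup G] (T : X → X) (u : X → G) (n : ℕ)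
    (x : X) : birkhoffSum T (fun y => u y - u (T y)) n x = u x - u (T^[n] x) := by
  simp only [birkhoffSum, ← Function.iterate_succ_apply' T]
  exact Finset.sum_range_sub' (fun i => u (T^[i] x)) n

theorem partialSups_birkhoffSum_le (T : X → X) (h : X → ℝ) (N : ℕ) (x : X) :
    partialSups (birkhoffSum T h) N x ≤ max 0 (h x + partialSups (birkhoffSum T h) N (T x)) := by
  rw [Pi.partialSups_apply]
  refine partialSups_le _ _ _ fun n hn => ?_
  cases n with
  | zero => exact le_max_left _ _
  | succ k =>
    rw [birkhoffSum_succ']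
    refine le_max_of_le_right ?_
    gcongr
    exact (le_partialSups_of_le (birkhoffSum T h) (by omega : k ≤ N) : _) (T x)

theorem preimage_setOf_bddAbove_birkhoffSum (T : X → X) (h : X → ℝ) :
    T ⁻¹' {x | BddAbove (range fun n => birkhoffSum T h n x)} =
      {x | BddAbove (range fun n => birkhoffSum T h n x)} := by
  ext x
  change BddAbove _ ↔ BddAbove _
  constructor
  · rintro ⟨C, hC⟩
    refine ⟨max 0 (h x + C), forall_mem_range.2 fun n => ?_⟩
    cases n with
    | zero => simp
    | succ n =>
      rw [birkhoffSum_succ']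
      exact le_max_of_le_right (by gcongr; exact hC (mem_range_self n))
  · rintro ⟨C, hC⟩
    refine ⟨C - h x, forall_mem_range.2 fun n => ?_⟩
    have := hC (mem_range_self (n + 1))
    rw [birkhoffSum_succ'] at this
    linarith

variable [MeasurableSpace X] {μ : Measure X} {T : X → X}

theorem Measurable.partialSups {f : ℕ → X → ℝ} (hf : ∀ n, Measurable (f n)) (N : ℕ) :
    Measurable (partialSups f N) := by
  induction N with
  | zero => simpa using hf 0
  | succ N ih => rw [partialSups_add_one]; exact ih.sup (hf _)

theorem MeasureTheory.Integrable.partialSups {f : ℕ → X → ℝ} (hf : ∀ n, Integrable (f n) μ)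
    (N : ℕ) : Integrable (partialSups f N) μ := by
  induction N with
  | zero => simpa using hf 0
  | succ N ih => rw [partialSups_add_one]; exact ih.sup (hf _)

theorem Measurable.birkhoffSum {h : X → ℝ} (hh : Measurable h) (hT : Measurable T) (n : ℕ) :
    Measurable (birkhoffSum T h n) :=
  Finset.measurable_sum _ fun i _ => hh.comp (hT.iterate i)

theorem MeasureTheory.MeasurePreserving.integrable_birkhoffSum (hT : MeasurePreserving T μ μ)
    {h : X → ℝ} (hh : Integrable h μ) (n : ℕ) : Integrable (birkhoffSum T h n) μ :=
  integrable_finsetSum _ fun i _ => (hT.iterate i).integrable_comp_of_integrable hh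

theorem MeasureTheory.Measure.QuasiMeasurePreserving.ae_birkhoffSum_le
    (hT : Measure.QuasiMeasurePreserving T μ μ) {u v : X → ℝ} (huv : u ≤ᵐ[μ] v) :
    ∀ᵐ x ∂μ, ∀ n, birkhoffSum T u n x ≤ birkhoffSum T v n x := by
  have : ∀ᵐ x ∂μ, ∀ k, u (T^[k] x) ≤ v (T^[k] x) := ae_all_iff.2 fun k => (hT.iterate k).ae huv
  filter_upwards [this] with x hx n
  exact Finset.sum_le_sum fun k _ => hx k

theorem MeasureTheory.MeasurePreserving.maximal_ergodic (hT : MeasurePreserving T μ μ)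
    {h : X → ℝ} (hm : Measurable h) (hi : Integrable h μ) :
    0 ≤ ∫ x in {x | ∃ n, 0 < birkhoffSum T h n x}, h x ∂μ := by
  set M : ℕ → X → ℝ := ⇑(partialSups (birkhoffSum T h))
  have hMm : ∀ N, Measurable (M N) := Measurable.partialSups (hm.birkhoffSum hT.measurable)
  have hMi : ∀ N, Integrable (M N) μ := Integrable.partialSups (hT.integrable_birkhoffSum hi)
  have hMTi : ∀ N, Integrable (fun x => M N (T x)) μ := fun N =>
    hT.integrable_comp_of_integrable (hMi N)
  have hM0 : ∀ N x, 0 ≤ M N x := fun N x =>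
    (le_partialSups_of_le (birkhoffSum T h) (Nat.zero_le N) : _) x
  have hEm : ∀ N, MeasurableSet {x | 0 < M N x} := fun N =>
    measurableSet_lt measurable_const (hMm N)
  have hE : {x | ∃ n, 0 < birkhoffSum T h n x} = ⋃ N, {x | 0 < M N x} := by
    ext x
    simp only [mem_ofPred_eq, mem_iUnion, M, Pi.partialSups_apply]
    refine ⟨fun ⟨n, hn⟩ => ⟨n, hn.trans_le (le_partialSups (fun n => birkhoffSum T h n x) n)⟩,
      fun ⟨N, hN⟩ => ?_⟩
    obtain ⟨n, -, hn⟩ := exists_partialSups_eq (fun n => birkhoffSum T h n x) N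
    exact ⟨n, hn ▸ hN⟩
  have hpartial : ∀ N, 0 ≤ ∫ x in {x | 0 < M N x}, h x ∂μ := by
    intro N
    have hpt : ∀ x, M N x - M N (T x) ≤ {x | 0 < M N x}.indicator h x := by
      intro x
      have hmax : M N x ≤ max 0 (h x + M N (T x)) := partialSups_birkhoffSum_le T h N x
      by_cases hx : x ∈ {x | 0 < M N x}
      · rw [indicator_of_mem hx]
        linarith [(le_max_iff.1 hmax).resolve_left hx.not_ge]
      · rw [indicator_of_notMem hx]
        linarith [not_lt.1 (show ¬0 < M N x from hx), hM0 N (T x)]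
    have hinv : ∫ x, M N (T x) ∂μ = ∫ x, M N x ∂μ := by
      rw [← integral_map hT.measurable.aemeasurable (hMm N).aestronglyMeasurable, hT.map_eq]
    calc 0 = ∫ x, M N x - M N (T x) ∂μ := by
          rw [integral_sub (hMi N) (hMTi N), hinv, sub_self]
      _ ≤ ∫ x, {x | 0 < M N x}.indicator h x ∂μ :=
          integral_mono ((hMi N).sub (hMTi N))
            (hi.indicator (hEm N)) hpt
      _ = ∫ x in {x | 0 < M N x}, h x ∂μ := integral_indicator (hEm N)
  have hmono : Monotone fun N => {x | 0 < M N x} := fun N N' hNN' x hx =>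
    hx.trans_le ((partialSups_monotone (birkhoffSum T h) hNN' : _) x)
  rw [hE]
  exact ge_of_tendsto' (tendsto_setIntegral_of_monotone hEm hmono hi.integrableOn) hpartial

theorem MeasureTheory.Conservative.not_ae_tendsto_atTop [NeZero μ] (hT : Conservative T μ)
    {g : X → ℝ} (hg : Measurable g) :
    ¬∀ᵐ x ∂μ, Tendsto (fun n => g (T^[n] x)) atTop atTop := by
  intro hlim
  obtain ⟨K, hK⟩ : ∃ K : ℕ, μ {x | g x ≤ K} ≠ 0 := by
    by_contra! h
    have hcover : ⋃ K : ℕ, {x | g x ≤ K} = univ := iUnion_eq_univ_iff.2 fun x => exists_nat_ge (g x)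
    have := measure_iUnion_null h
    rw [hcover, Measure.measure_univ_eq_zero] at this
    exact NeZero.ne μ this
  refine hK (measure_eq_zero_iff_ae_notMem.2 ?_)
  filter_upwards [hlim, hT.ae_mem_imp_frequently_image_mem
    (measurableSet_le hg measurable_const).nullMeasurableSet] with x hx hrec hxK
  obtain ⟨n, hle, hgt⟩ := ((hrec hxK).and_eventually (hx.eventually_gt_atTop K)).exists
  exact hgt.not_ge hle

theorem integrable_max_of_ae_le [IsFiniteMeasure μ] {φ ψ : X → ℝ} (hφ : AEStronglyMeasurable φ μ)
    (hψ : Integrable ψ μ) (hle : φ ≤ᵐ[μ] ψ) (M : ℝ) : Integrable (fun x => max (φ x) M) μ := by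
  refine (hψ.abs.add (integrable_const |M|)).mono' (hφ.sup aestronglyMeasurable_const) ?_
  filter_upwards [hle] with x hx
  rw [Pi.add_apply, Real.norm_eq_abs, abs_le]
  constructor
  · linarith [neg_abs_le M, abs_nonneg (ψ x), le_max_right (φ x) M]
  · exact max_le (by linarith [le_abs_self (ψ x), abs_nonneg M])
      (by linarith [le_abs_self M, abs_nonneg (ψ x)])

theorem integrable_of_forall_integral_max_nonneg [IsFiniteMeasure μ] {φ ψ : X → ℝ}
    (hφ : AEStronglyMeasurable φ μ) (hψ : Integrable ψ μ) (hle : φ ≤ᵐ[μ] ψ)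
    (htrunc : ∀ M : ℕ, 0 ≤ ∫ x, max (φ x) (-M) ∂μ) : Integrable φ μ := by
  set G : ℕ → X → ℝ := fun M x => max (φ x) (-M)
  have hG : ∀ M, Integrable (G M) μ := fun M => integrable_max_of_ae_le hφ hψ hle _
  have hlim : ∀ x, Tendsto (fun M => G M x) atTop (𝓝 (φ x)) := fun x =>
    tendsto_const_nhds.congr' <| (tendsto_natCast_atTop_atTop.eventually_ge_atTop (-φ x)).mono
      fun M hM => (max_eq_left (by linarith)).symm
  have hnorm : ∀ M, ∫⁻ x, ‖G M x‖ₑ ∂μ ≤ ENNReal.ofReal (2 * ∫ x, |ψ x| ∂μ) := by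
    intro M
    rw [← ofReal_integral_norm_eq_lintegral_enorm (hG M)]
    refine ENNReal.ofReal_le_ofReal ?_
    have hpt : ∀ᵐ x ∂μ, ‖G M x‖ ≤ 2 * |ψ x| - G M x := by
      filter_upwards [hle] with x hx
      have : G M x ≤ |ψ x| :=
        max_le (hx.trans (le_abs_self _)) ((neg_nonpos.2 M.cast_nonneg).trans (abs_nonneg _))
      rw [Real.norm_eq_abs, abs_le]
      constructor <;> linarith [abs_nonneg (ψ x)]
    calc ∫ x, ‖G M x‖ ∂μ ≤ ∫ x, 2 * |ψ x| - G M x ∂μ :=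
          integral_mono_ae (hG M).norm ((hψ.abs.const_mul 2).sub (hG M)) hpt
      _ = 2 * ∫ x, |ψ x| ∂μ - ∫ x, G M x ∂μ := by
          rw [integral_sub (hψ.abs.const_mul 2) (hG M), integral_const_mul]
      _ ≤ 2 * ∫ x, |ψ x| ∂μ := by linarith [htrunc M]
  refine ⟨hφ, ?_⟩
  calc ∫⁻ x, ‖φ x‖ₑ ∂μ = ∫⁻ x, liminf (fun M => ‖G M x‖ₑ) atTop ∂μ :=
        lintegral_congr fun x => ((hlim x).enorm.liminf_eq).symm
    _ ≤ liminf (fun M => ∫⁻ x, ‖G M x‖ₑ ∂μ) atTop :=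
        lintegral_liminf_le' fun M => (hG M).aemeasurable.enorm
    _ ≤ ENNReal.ofReal (2 * ∫ x, |ψ x| ∂μ) :=
        liminf_le_of_frequently_le' (Frequently.of_forall hnorm)
    _ < ⊤ := ENNReal.ofReal_lt_top

variable [IsProbabilityMeasure μ]

theorem Ergodic.ae_eventually_birkhoffSum_le (hT : Ergodic T μ) {h : X → ℝ} (hm : Measurable h)
    (hi : Integrable h μ) {c : ℝ} (hc : ∫ x, h x ∂μ < c) :
    ∀ᵐ x ∂μ, ∀ᶠ n in atTop, birkhoffSum T h n x ≤ c * n := by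
  obtain ⟨b, hhb, hbc⟩ := exists_between hc
  set h' : X → ℝ := fun x => h x - b
  have hm' : Measurable h' := hm.sub measurable_const
  have hi' : Integrable h' μ := hi.sub (integrable_const b)
  have hS : ∀ n x, birkhoffSum T h' n x = birkhoffSum T h n x - n * b := by
    intro n x
    simp [h', birkhoffSum, Finset.sum_sub_distrib]
  have hAm : MeasurableSet {x | BddAbove (range fun n => birkhoffSum T h' n x)} :=
    measurableSet_bddAbove_range fun n => hm'.birkhoffSum hT.measurable n
  rcases hT.ae_mem_or_ae_notMem hAm (preimage_setOf_bddAbove_birkhoffSum T h') with hA | hA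
  · filter_upwards [hA] with x ⟨C, hC⟩
    have hlin := tendsto_natCast_atTop_atTop.const_mul_atTop (sub_pos.2 hbc)
    filter_upwards [hlin.eventually_ge_atTop C] with n hn
    have := hC (mem_range_self n)
    rw [hS] at this
    linarith
  · exfalso
    have hE : ∀ᵐ x ∂μ, x ∈ {x | ∃ n, 0 < birkhoffSum T h' n x} := by
      filter_upwards [hA] with x hx
      by_contra! hle
      exact hx ⟨0, forall_mem_range.2 hle⟩
    have hmax := hT.toMeasurePreserving.maximal_ergodic hm' hi'
    have hint : ∫ x, h' x ∂μ = ∫ x, h x ∂μ - b := by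
      simp [h', integral_sub hi (integrable_const b)]
    rw [Measure.restrict_eq_self_of_ae_mem hE, hint] at hmax
    linarith

theorem Ergodic.integral_nonneg_of_sub_comp_le (hT : Ergodic T μ) {g χ : X → ℝ}
    (hg : Measurable g) (hχm : Measurable χ) (hχ : Integrable χ μ)
    (hle : ∀ᵐ x ∂μ, g x - g (T x) ≤ χ x) : 0 ≤ ∫ x, χ x ∂μ := by
  by_contra! hneg
  obtain ⟨c, hχc, hc⟩ := exists_between hneg
  refine hT.toMeasurePreserving.conservative.not_ae_tendsto_atTop hg ?_
  filter_upwards [hT.ae_eventually_birkhoffSum_le hχm hχ hχc,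
    hT.quasiMeasurePreserving.ae_birkhoffSum_le hle] with x hbound hsum
  refine tendsto_atTop_mono' atTop ?_ (tendsto_atTop_add_const_left atTop (g x)
    (tendsto_natCast_atTop_atTop.const_mul_atTop (neg_pos.2 hc)))
  filter_upwards [hbound] with n hn
  have := hsum n
  rw [birkhoffSum_sub_comp] at this
  linarith

theorem Ergodic.integrable_sub_comp_of_ae_le (hT : Ergodic T μ) {g ψ : X → ℝ} (hg : Measurable g)
    (hψ : Integrable ψ μ) (hle : ∀ᵐ x ∂μ, g x - g (T x) ≤ ψ x) :
    Integrable (fun x => g x - g (T x)) μ := by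
  have hφ : Measurable fun x => g x - g (T x) := hg.sub (hg.comp hT.measurable)
  refine integrable_of_forall_integral_max_nonneg hφ.aestronglyMeasurable hψ hle fun M => ?_
  exact hT.integral_nonneg_of_sub_comp_le hg (hφ.max measurable_const)
    (integrable_max_of_ae_le hφ.aestronglyMeasurable hψ hle _)
    (Eventually.of_forall fun x => le_max_left _ _)

theorem Ergodic.ae_tendsto_comp_iterate_div_of_integrable_sub_comp (hT : Ergodic T μ)
    {g : X → ℝ} (hg : Measurable g) (hg0 : ∀ x, 0 ≤ g x)
    (hφ : Integrable (fun x => g x - g (T x)) μ) :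
    ∀ᵐ x ∂μ, Tendsto (fun n : ℕ => g (T^[n] x) / n) atTop (𝓝 0) := by
  set φ : X → ℝ := fun x => g x - g (T x) with hφ_def
  have hφm : Measurable φ := hg.sub (hg.comp hT.measurable)
  have hint : 0 ≤ ∫ x, φ x ∂μ :=
    hT.integral_nonneg_of_sub_comp_le hg hφm hφ (Eventually.of_forall fun x => le_rfl)
  have hgrowth : ∀ᵐ x ∂μ, ∀ k : ℕ, ∀ᶠ n in atTop, g (T^[n] x) ≤ g x + n / (k + 1) := by
    refine ae_all_iff.2 fun k => ?_
    have hc : ∫ x, (-φ) x ∂μ < 1 / (k + 1) := by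
      simp only [Pi.neg_apply, integral_neg]
      linarith [show (0 : ℝ) < 1 / (k + 1) by positivity]
    filter_upwards [hT.ae_eventually_birkhoffSum_le hφm.neg hφ.neg hc] with x hx
    filter_upwards [hx] with n hn
    rw [birkhoffSum_neg, hφ_def, birkhoffSum_sub_comp] at hn
    linarith [show (1 : ℝ) / (k + 1) * n = n / (k + 1) by ring]
  filter_upwards [hgrowth] with x hx
  exact tendsto_div_natCast_zero_of_le_add_div (fun n => hg0 _) hx

end

theorem tempered_of_log_sub_le_general {X : Type*} [MeasurableSpace X]
    (μ : Measure X) [IsProbabilityMeasure μ]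
    (f finv : X → X) (hf : Ergodic f μ) (hfinv : Measurable finv)
    (hleft : Function.LeftInverse finv f) (hright : Function.RightInverse finv f)
    (D : X → ℝ) (hDmeas : Measurable D) (hD1 : ∀ x, 1 ≤ D x)
    (ψ : X → ℝ) (hψint : Integrable ψ μ)
    (hbound : ∀ᵐ x ∂μ, Real.log (D x) - Real.log (D (f x)) ≤ ψ x) :
    ∀ᵐ x ∂μ,
      Tendsto (fun n : ℕ => Real.log (D (f^[n] x)) / n) atTop (nhds 0) ∧
      Tendsto (fun n : ℕ => Real.log (D (finv^[n] x)) / n) atTop (nhds 0) := by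
  set g : X → ℝ := fun x => Real.log (D x)
  have hg : Measurable g := hDmeas.log
  have hg0 : ∀ x, 0 ≤ g x := fun x => Real.log_nonneg (hD1 x)
  have hφ : Integrable (fun x => g x - g (f x)) μ := hf.integrable_sub_comp_of_ae_le hg hψint hbound
  let e : X ≃ᵐ X := ⟨⟨f, finv, hleft, hright⟩, hf.measurable, hfinv⟩
  have hfinv_erg : Ergodic finv μ := Ergodic.symm (e := e) hf
  have hφinv : Integrable (fun x => g x - g (finv x)) μ :=
    (hfinv_erg.toMeasurePreserving.integrable_comp_of_integrable hφ).neg.congr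
      (Eventually.of_forall fun x => by simp [hright x])
  filter_upwards [hf.ae_tendsto_comp_iterate_div_of_integrable_sub_comp hg hg0 hφ,
    hfinv_erg.ae_tendsto_comp_iterate_div_of_integrable_sub_comp hg hg0 hφinv] with x h₁ h₂
  exact ⟨h₁, h₂⟩

/-- Temperedness lemma: let `(X, ℬ, μ)` be a probability space, `f` an invertible
ergodic measure-preserving transformation (with inverse `finv`), `D : X → [1, ∞)`
measurable, and `ψ : X → [0, ∞)` integrable with
`log D(x) − log D(f(x)) ≤ ψ(x)` for μ-a.e. `x`.  Then
`(1/n)·log D(fⁿ(x)) → 0` and `(1/n)·log D(f⁻ⁿ(x)) → 0` for μ-a.e. `x`. -/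
theorem tempered_of_log_sub_le {X : Type*} [MeasurableSpace X]
    (μ : Measure X) [IsProbabilityMeasure μ]
    (f finv : X → X) (hf : Ergodic f μ) (hfinv : Measurable finv)
    (hleft : Function.LeftInverse finv f) (hright : Function.RightInverse finv f)
    (D : X → ℝ) (hDmeas : Measurable D) (hD1 : ∀ x, 1 ≤ D x)
    (ψ : X → ℝ) (hψint : Integrable ψ μ) (hψ0 : ∀ x, 0 ≤ ψ x)
    (hbound : ∀ᵐ x ∂μ, Real.log (D x) - Real.log (D (f x)) ≤ ψ x) :
    ∀ᵐ x ∂μ,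
      Tendsto (fun n : ℕ => Real.log (D (f^[n] x)) / n) atTop (nhds 0) ∧
      Tendsto (fun n : ℕ => Real.log (D (finv^[n] x)) / n) atTop (nhds 0) :=
  tempered_of_log_sub_le_general μ f finv hf hfinv hleft hright D hDmeas hD1 ψ hψint hbound
end

section
/- Let X be a metric space with metric ρ, Λ ⊆ X, and let E(x), F(x), x ∈ Λ, be two families of subspaces of ℝ^d such that: (1) E(x) and F(x) are orthogonal for each x ∈ Λ; (2) the family E(x), x ∈ Λ, is Hölder continuous on Λ; (3) the family E(x) ⊕ F(x), x ∈ Λ, is Hölder continuous on Λ. Then the family F(x), x ∈ Λ, is also Hölder continuous on Λ. -/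
/-! Write `P_K` for the orthogonal projection onto `K`. Since `E ⟂ F`, `P_{E ⊔ F} = P_E + P_F`,
so for `v ∈ F y` we have `v - P_{F x} v = (v - P_{E x ⊔ F x} v) + P_{E x} v`. The first term is at
most `d(E x ⊔ F x, E y ⊔ F y) ‖v‖`; as `v ⟂ E y`, `‖P_{E x} v‖² = ⟪u - P_{E y} u, v⟫` with
`u = P_{E x} v`, so the second is at most `d(E x, E y) ‖v‖`. Hence
`d(F x, F y) ≤ d(E x, E y) + d(E x ⊔ F x, E y ⊔ F y)`, and the two Hölder bounds add up, with the
smaller of the two exponents. -/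
open Metric

noncomputable section

/-- The distance `d(V, W)` between two subspaces of `ℝ^d`. -/
def subDist {d : ℕ} (V W : Submodule ℝ (EuclideanSpace ℝ (Fin d))) : ℝ :=
  max (⨆ w : {w : EuclideanSpace ℝ (Fin d) // w ∈ W ∧ ‖w‖ = 1},
        infDist (w : EuclideanSpace ℝ (Fin d)) (V : Set (EuclideanSpace ℝ (Fin d))))
      (⨆ v : {v : EuclideanSpace ℝ (Fin d) // v ∈ V ∧ ‖v‖ = 1},
        infDist (v : EuclideanSpace ℝ (Fin d)) (W : Set (EuclideanSpace ℝ (Fin d))))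

/-- Hölder continuity of a family of subspaces of `ℝ^d` on a set `Λ`. -/
def HolderFamily {X : Type*} [MetricSpace X] {d : ℕ} (Λ : Set X)
    (E : X → Submodule ℝ (EuclideanSpace ℝ (Fin d))) : Prop :=
  ∃ L ε₀ β : ℝ, 0 < L ∧ 0 < ε₀ ∧ 0 < β ∧ β ≤ 1 ∧
    ∀ x ∈ Λ, ∀ y ∈ Λ, dist x y ≤ ε₀ → subDist (E x) (E y) ≤ L * dist x y ^ β

namespace Submodule

variable {𝕜 V : Type*} [RCLike 𝕜] [NormedAddCommGroup V] [InnerProductSpace 𝕜 V]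

theorem infDist_eq_norm_sub_starProjection (K : Submodule 𝕜 V) [K.HasOrthogonalProjection]
    (v : V) : infDist v K = ‖v - K.starProjection v‖ := by
  rw [infDist_eq_iInf, starProjection_minimal]
  simp only [dist_eq_norm]
  rfl

theorem infDist_smul (K : Submodule 𝕜 V) [K.HasOrthogonalProjection] (c : 𝕜) (v : V) :
    infDist (c • v) K = ‖c‖ * infDist v K := by
  rw [infDist_eq_norm_sub_starProjection, infDist_eq_norm_sub_starProjection, map_smul,
    ← smul_sub, norm_smul]

theorem IsOrtho.starProjection_sup_apply {U W : Submodule 𝕜 V} (h : U ⟂ W)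
    [U.HasOrthogonalProjection] [W.HasOrthogonalProjection] [(U ⊔ W).HasOrthogonalProjection]
    (v : V) : (U ⊔ W).starProjection v = U.starProjection v + W.starProjection v := by
  refine eq_starProjection_of_mem_orthogonal
    (add_mem_sup (U.starProjection_apply_mem v) (W.starProjection_apply_mem v)) ?_
  rw [← inf_orthogonal, mem_inf]
  constructor
  · rw [← sub_sub]
    exact sub_mem (U.sub_starProjection_mem_orthogonal v) (h.symm (W.starProjection_apply_mem v))
  · rw [add_comm, ← sub_sub]
    exact sub_mem (W.sub_starProjection_mem_orthogonal v) (h (U.starProjection_apply_mem v))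

theorem norm_starProjection_le_of_mem_orthogonal {U U' : Submodule 𝕜 V}
    [U.HasOrthogonalProjection] [U'.HasOrthogonalProjection] {a : ℝ} (ha : 0 ≤ a)
    (hU : ∀ u ∈ U, infDist u U' ≤ a * ‖u‖) {v : V} (hv : v ∈ U'ᗮ) :
    ‖U.starProjection v‖ ≤ a * ‖v‖ := by
  set e := U.starProjection v
  have hsq : ‖e‖ ^ 2 ≤ ‖e‖ * (a * ‖v‖) :=
    calc ‖e‖ ^ 2 = RCLike.re (inner 𝕜 e v) := by
          rw [re_inner_starProjection_eq_normSq]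
          rfl
      _ = RCLike.re (inner 𝕜 (e - U'.starProjection e) v) := by
          rw [inner_sub_left, inner_right_of_mem_orthogonal (U'.starProjection_apply_mem e) hv,
            sub_zero]
      _ ≤ infDist e U' * ‖v‖ := by
          rw [infDist_eq_norm_sub_starProjection]
          exact re_inner_le_norm _ _
      _ ≤ a * ‖e‖ * ‖v‖ := by
          gcongr
          exact hU e (U.starProjection_apply_mem v)
      _ = ‖e‖ * (a * ‖v‖) := by ring
  rcases (norm_nonneg e).eq_or_lt with he | he
  · rw [← he]
    positivity
  · exact le_of_mul_le_mul_left (by rwa [sq] at hsq) he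

theorem infDist_le_of_isOrtho {E F E' : Submodule 𝕜 V} (hEF : E ⟂ F)
    [E.HasOrthogonalProjection] [F.HasOrthogonalProjection] [(E ⊔ F).HasOrthogonalProjection]
    [E'.HasOrthogonalProjection] {a b : ℝ} (ha : 0 ≤ a) (hE : ∀ u ∈ E, infDist u E' ≤ a * ‖u‖)
    {v : V} (hv : v ∈ E'ᗮ) (hb : infDist v (E ⊔ F : Submodule 𝕜 V) ≤ b * ‖v‖) :
    infDist v F ≤ (a + b) * ‖v‖ := by
  rw [infDist_eq_norm_sub_starProjection] at hb ⊢
  have hsplit : v - F.starProjection v = (v - (E ⊔ F).starProjection v) + E.starProjection v := by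
    rw [hEF.starProjection_sup_apply]
    abel
  calc ‖v - F.starProjection v‖
      ≤ ‖v - (E ⊔ F).starProjection v‖ + ‖E.starProjection v‖ := hsplit ▸ norm_add_le _ _
    _ ≤ b * ‖v‖ + a * ‖v‖ := add_le_add hb (norm_starProjection_le_of_mem_orthogonal ha hE hv)
    _ = (a + b) * ‖v‖ := by ring

end Submodule

section subDist

variable {d : ℕ}

local notation "ℝ^" d => EuclideanSpace ℝ (Fin d)

theorem subDist_comm (V W : Submodule ℝ (ℝ^d)) : subDist V W = subDist W V :=
  max_comm _ _

theorem subDist_nonneg (V W : Submodule ℝ (ℝ^d)) : 0 ≤ subDist V W :=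
  le_max_of_le_left (Real.iSup_nonneg fun _ => infDist_nonneg)

theorem infDist_le_subDist_mul_norm {V W : Submodule ℝ (ℝ^d)} {w : ℝ^d} (hw : w ∈ W) :
    infDist w V ≤ subDist V W * ‖w‖ := by
  rcases eq_or_ne w 0 with rfl | hw0
  · simp [infDist_zero_of_mem V.zero_mem]
  set u : ℝ^d := ‖w‖⁻¹ • w
  have hu : ‖u‖ = 1 := norm_smul_inv_norm hw0
  have hbdd : BddAbove (Set.range fun u : {u : ℝ^d // u ∈ W ∧ ‖u‖ = 1} => infDist (u : ℝ^d) V) :=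
    ⟨1, by
      rintro _ ⟨⟨u, -, hu⟩, rfl⟩
      simpa [hu] using infDist_le_dist_of_mem (x := u) V.zero_mem⟩
  have hu_le : infDist u V ≤ subDist V W :=
    le_max_of_le_left (le_ciSup hbdd ⟨u, W.smul_mem _ hw, hu⟩)
  calc infDist w V = ‖w‖ * infDist u V := by
        rw [Submodule.infDist_smul, Real.norm_eq_abs, abs_inv, abs_norm,
          mul_inv_cancel_left₀ (norm_ne_zero_iff.mpr hw0)]
    _ ≤ subDist V W * ‖w‖ := by
        rw [mul_comm]
        gcongr

theorem subDist_le_of_forall_infDist_le {V W : Submodule ℝ (ℝ^d)} {c : ℝ} (hc : 0 ≤ c)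
    (hW : ∀ w ∈ W, infDist w V ≤ c * ‖w‖) (hV : ∀ v ∈ V, infDist v W ≤ c * ‖v‖) :
    subDist V W ≤ c := by
  refine max_le (Real.iSup_le ?_ hc) (Real.iSup_le ?_ hc)
  · rintro ⟨w, hw, h1⟩
    simpa [h1] using hW w hw
  · rintro ⟨v, hv, h1⟩
    simpa [h1] using hV v hv

theorem subDist_le_add_of_isOrtho {E F E' F' : Submodule ℝ (ℝ^d)} (h : E ⟂ F) (h' : E' ⟂ F') :
    subDist F F' ≤ subDist E E' + subDist (E ⊔ F) (E' ⊔ F') := by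
  refine subDist_le_of_forall_infDist_le (add_nonneg (subDist_nonneg _ _) (subDist_nonneg _ _))
    (fun v hv => ?_) (fun v hv => ?_)
  · exact Submodule.infDist_le_of_isOrtho h (subDist_nonneg _ _)
      (fun u hu => subDist_comm E E' ▸ infDist_le_subDist_mul_norm hu) (h'.symm hv)
      (infDist_le_subDist_mul_norm (Submodule.mem_sup_right hv))
  · rw [subDist_comm E, subDist_comm (E ⊔ F)]
    exact Submodule.infDist_le_of_isOrtho h' (subDist_nonneg _ _)
      (fun u hu => subDist_comm E' E ▸ infDist_le_subDist_mul_norm hu) (h.symm hv)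
      (infDist_le_subDist_mul_norm (Submodule.mem_sup_right hv))

end subDist

theorem HolderFamily.of_subDist_le_add {X : Type*} [MetricSpace X] {d : ℕ} {Λ : Set X}
    {E F G : X → Submodule ℝ (EuclideanSpace ℝ (Fin d))} (hE : HolderFamily Λ E)
    (hG : HolderFamily Λ G)
    (h : ∀ x ∈ Λ, ∀ y ∈ Λ, subDist (F x) (F y) ≤ subDist (E x) (E y) + subDist (G x) (G y)) :
    HolderFamily Λ F := by
  obtain ⟨L₁, ε₁, β₁, hL₁, hε₁, hβ₁, hβ₁_le, hE⟩ := hE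
  obtain ⟨L₂, ε₂, β₂, hL₂, hε₂, hβ₂, -, hG⟩ := hG
  refine ⟨L₁ + L₂, min 1 (min ε₁ ε₂), min β₁ β₂, by positivity, by positivity, lt_min hβ₁ hβ₂,
    (min_le_left _ _).trans hβ₁_le, fun x hx y hy hxy => ?_⟩
  obtain ⟨hr1, hr₁, hr₂⟩ : dist x y ≤ 1 ∧ dist x y ≤ ε₁ ∧ dist x y ≤ ε₂ := by
    simpa only [le_min_iff] using hxy
  have hlower {L β : ℝ} (hL : 0 < L) (hβ : min β₁ β₂ ≤ β) :
      L * dist x y ^ β ≤ L * dist x y ^ min β₁ β₂ :=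
    mul_le_mul_of_nonneg_left (Real.rpow_le_rpow_of_exponent_ge' dist_nonneg hr1
      (le_min hβ₁.le hβ₂.le) hβ) hL.le
  calc subDist (F x) (F y) ≤ subDist (E x) (E y) + subDist (G x) (G y) := h x hx y hy
    _ ≤ L₁ * dist x y ^ β₁ + L₂ * dist x y ^ β₂ := add_le_add (hE x hx y hy hr₁) (hG x hx y hy hr₂)
    _ ≤ L₁ * dist x y ^ min β₁ β₂ + L₂ * dist x y ^ min β₁ β₂ :=
        add_le_add (hlower hL₁ (min_le_left _ _)) (hlower hL₂ (min_le_right _ _))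
    _ = (L₁ + L₂) * dist x y ^ min β₁ β₂ := by ring

/-- If `E(x)` and `F(x)` are orthogonal for each `x ∈ Λ`, the family `E(x)` is Hölder
continuous on `Λ`, and the family `E(x) ⊕ F(x)` is Hölder continuous on `Λ`, then the
family `F(x)` is also Hölder continuous on `Λ`. -/
theorem holderFamily_of_orthogonal_of_holder_sup {X : Type*} [MetricSpace X] {d : ℕ}
    (Λ : Set X) (E F : X → Submodule ℝ (EuclideanSpace ℝ (Fin d)))
    (horth : ∀ x ∈ Λ, ∀ u ∈ E x, ∀ v ∈ F x, (inner ℝ u v : ℝ) = 0)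
    (hE : HolderFamily Λ E)
    (hEF : HolderFamily Λ (fun x => E x ⊔ F x)) :
    HolderFamily Λ F :=
  hE.of_subDist_le_add hEF fun x hx y hy =>
    subDist_le_add_of_isOrtho (Submodule.isOrtho_iff_inner_eq.mpr (horth x hx))
      (Submodule.isOrtho_iff_inner_eq.mpr (horth y hy))
end
end

section
/- Let (A_n)_{n≥1} and (B_n)_{n≥1} be two sequences of real d×d matrices (d > 0) such that for some constants 0 < λ < μ and C ≥ 1 there exist subspaces E, E', F, F' of ℝ^d with ℝ^d = E ⊕ E' = F ⊕ F' satisfying: (1) ‖A_n u‖ ≤ C·λ^n‖u‖ for u ∈ E and C^{−1}·μ^n‖v‖ ≤ ‖A_n v‖ for v ∈ E'; (2) ‖B_n u‖ ≤ C·λ^n‖u‖ for u ∈ F and C^{−1}·μ^n‖v‖ ≤ ‖B_n v‖ for v ∈ F'; (3) max{‖v‖, ‖w‖} ≤ d·‖v + w‖ whenever v ∈ E, w ∈ E' or v ∈ F, w ∈ F'. Then for each pair (δ, a) ∈ (0,1] × [λ, ∞) satisfying (λ/a)^{n+1} < δ ≤ (λ/a)^n and ‖A_n − B_n‖ ≤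 δ·a^n, one has d(E, F) ≤ (2 + d)·C²·(μ/λ)·δ^{log(μ/λ)/log(a/λ)}. -/
/-!
Decompose a unit vector `u ∈ E` along `F ⊕ F'` as `u = v + w`; then `d(u, F) ≤ ‖w‖`. Since `A_n`
contracts `E`, `B_n` is `λⁿ`-close to `A_n`, and `B_n` contracts `v ∈ F` (with `‖v‖ ≤ d` by the
angle condition), `‖B_n w‖ = ‖B_n u − B_n v‖ = O(λⁿ)`; as `B_n` expands `F'` by `μⁿ`, this forces
`‖w‖ = O((λ/μ)ⁿ)`. The same argument with the roles of the two sequences exchanged bounds the other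
half of `d(E, F)`. Finally `(λ/a)^{n+1} < δ` turns `(λ/μ)ⁿ` into `(μ/λ) δ^{log(μ/λ)/log(a/λ)}`,
because `(λ/a)^{log(μ/λ)/log(a/λ)} = λ/μ`.
-/

open Metric

noncomputable section

theorem subDist_le {d : ℕ} {V W : Submodule ℝ (EuclideanSpace ℝ (Fin d))} {r : ℝ}
    (hr : 0 ≤ r) (hVW : ∀ v ∈ V, ‖v‖ = 1 → infDist v (W : Set _) ≤ r)
    (hWV : ∀ w ∈ W, ‖w‖ = 1 → infDist w (V : Set _) ≤ r) :
    subDist V W ≤ r :=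
  max_le (Real.iSup_le (fun w ↦ hWV w w.2.1 w.2.2) hr)
    (Real.iSup_le (fun v ↦ hVW v v.2.1 v.2.2) hr)

section Splitting

variable {X Y : Type*} [NormedAddCommGroup X] [NormedSpace ℝ X]
  [NormedAddCommGroup Y] [NormedSpace ℝ Y]

theorem infDist_le_of_codisjoint (A B : X →L[ℝ] Y) {F F' : Submodule ℝ X}
    (hFF' : Codisjoint F F') {s t K : ℝ} (hs : 0 < s) (ht : 0 ≤ t)
    (hB₁ : ∀ v ∈ F, ‖B v‖ ≤ t * ‖v‖) (hB₂ : ∀ w ∈ F', s * ‖w‖ ≤ ‖B w‖)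
    (hang : ∀ v ∈ F, ∀ w ∈ F', ‖v‖ ≤ K * ‖v + w‖) (u : X) :
    infDist u (F : Set X) ≤ (‖A u‖ + ‖A - B‖ * ‖u‖ + t * (K * ‖u‖)) / s := by
  obtain ⟨v, w, hv, hw, rfl⟩ := Submodule.codisjoint_iff_exists_add_eq.mp hFF' u
  have hBw : B w = A (v + w) - (A - B) (v + w) - B v := by simp
  have hBw_le : s * ‖w‖ ≤ ‖A (v + w)‖ + ‖A - B‖ * ‖v + w‖ + t * (K * ‖v + w‖) :=
    calc s * ‖w‖ ≤ ‖B w‖ := hB₂ w hw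
      _ ≤ ‖A (v + w)‖ + ‖(A - B) (v + w)‖ + ‖B v‖ := by
        rw [hBw]; exact (norm_sub_le _ _).trans (by gcongr; exact norm_sub_le _ _)
      _ ≤ _ := by
        gcongr
        · exact (A - B).le_opNorm _
        · exact (hB₁ v hv).trans (mul_le_mul_of_nonneg_left (hang v hv w hw) ht)
  calc infDist (v + w) (F : Set X) ≤ dist (v + w) v := infDist_le_dist_of_mem hv
    _ = ‖w‖ := by rw [dist_eq_norm, add_sub_cancel_left]
    _ ≤ _ := by rw [le_div_iff₀ hs, mul_comm]; exact hBw_le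

theorem infDist_le_of_exponential_splitting (A B : X →L[ℝ] Y) {E F F' : Submodule ℝ X}
    (hFF' : Codisjoint F F') {lam mu C K : ℝ} {n : ℕ} (hlam : 0 ≤ lam) (hmu : 0 < mu)
    (hC : 1 ≤ C) (hA₁ : ∀ u ∈ E, ‖A u‖ ≤ C * lam ^ n * ‖u‖)
    (hB₁ : ∀ v ∈ F, ‖B v‖ ≤ C * lam ^ n * ‖v‖)
    (hB₂ : ∀ w ∈ F', C⁻¹ * mu ^ n * ‖w‖ ≤ ‖B w‖)
    (hang : ∀ v ∈ F, ∀ w ∈ F', ‖v‖ ≤ K * ‖v + w‖) (hAB : ‖A - B‖ ≤ lam ^ n)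
    {u : X} (hu : u ∈ E) :
    infDist u (F : Set X) ≤ (2 + K) * C ^ 2 * (lam / mu) ^ n * ‖u‖ := by
  have hC₀ : 0 < C := one_pos.trans_le hC
  have hlamn : 0 ≤ lam ^ n := pow_nonneg hlam n
  refine (infDist_le_of_codisjoint A B hFF' (by positivity) (by positivity) hB₁ hB₂ hang u).trans ?_
  rw [div_le_iff₀ (by positivity), div_pow]
  calc ‖A u‖ + ‖A - B‖ * ‖u‖ + C * lam ^ n * (K * ‖u‖)
      ≤ C * lam ^ n * ‖u‖ + C * lam ^ n * ‖u‖ + C * lam ^ n * (K * ‖u‖) := by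
        gcongr
        · exact hA₁ u hu
        · exact hAB.trans (le_mul_of_one_le_left hlamn hC)
    _ = (2 + K) * C ^ 2 * (lam ^ n / mu ^ n) * ‖u‖ * (C⁻¹ * mu ^ n) := by
        field_simp
        ring

end Splitting

theorem div_pow_le_mul_rpow_logb {lam mu a δ : ℝ} {n : ℕ} (hlam : 0 < lam) (hlammu : lam ≤ mu)
    (hla : lam < a) (hδ : (lam / a) ^ (n + 1) ≤ δ) :
    (lam / mu) ^ n ≤ mu / lam * δ ^ Real.logb (a / lam) (mu / lam) := by
  have hmu : 0 < mu := hlam.trans_le hlammu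
  have ha₀ : 0 < a := hlam.trans hla
  have ha : 1 < a / lam := (one_lt_div hlam).mpr hla
  set e := Real.logb (a / lam) (mu / lam)
  have he : 0 ≤ e := Real.logb_nonneg ha ((one_le_div hlam).mpr hlammu)
  have hbase : (lam / a) ^ e = lam / mu := by
    rw [← inv_div, Real.inv_rpow (by positivity),
      Real.rpow_logb (by positivity) ha.ne' (by positivity), inv_div]
  calc (lam / mu) ^ n = mu / lam * (lam / mu) ^ (n + 1) := by
        rw [pow_succ']; field_simp
    _ = mu / lam * ((lam / a) ^ (n + 1)) ^ e := by
        rw [← hbase, Real.rpow_pow_comm (by positivity)]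
    _ ≤ mu / lam * δ ^ e := by gcongr

theorem brin_subspace_distance_general {d : ℕ}
    (A B : ℕ → EuclideanSpace ℝ (Fin d) →L[ℝ] EuclideanSpace ℝ (Fin d))
    (lam mu C : ℝ) (hlam : 0 < lam) (hlammu : lam < mu) (hC : 1 ≤ C)
    (E E' F F' : Submodule ℝ (EuclideanSpace ℝ (Fin d)))
    (hEE' : IsCompl E E') (hFF' : IsCompl F F')
    (hA₁ : ∀ n : ℕ, 1 ≤ n → ∀ u ∈ E, ‖A n u‖ ≤ C * lam ^ n * ‖u‖)
    (hA₂ : ∀ n : ℕ, 1 ≤ n → ∀ v ∈ E', C⁻¹ * mu ^ n * ‖v‖ ≤ ‖A n v‖)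
    (hB₁ : ∀ n : ℕ, 1 ≤ n → ∀ u ∈ F, ‖B n u‖ ≤ C * lam ^ n * ‖u‖)
    (hB₂ : ∀ n : ℕ, 1 ≤ n → ∀ v ∈ F', C⁻¹ * mu ^ n * ‖v‖ ≤ ‖B n v‖)
    (hangE : ∀ v ∈ E, ∀ w ∈ E', max ‖v‖ ‖w‖ ≤ (d : ℝ) * ‖v + w‖)
    (hangF : ∀ v ∈ F, ∀ w ∈ F', max ‖v‖ ‖w‖ ≤ (d : ℝ) * ‖v + w‖) :
    ∀ (δ a : ℝ) (n : ℕ), 1 ≤ n → 0 < δ → δ ≤ 1 → lam ≤ a →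
      (lam / a) ^ (n + 1) < δ → δ ≤ (lam / a) ^ n →
      ‖A n - B n‖ ≤ δ * a ^ n →
      subDist E F ≤
        (2 + (d : ℝ)) * C ^ 2 * (mu / lam) *
          δ ^ (Real.log (mu / lam) / Real.log (a / lam)) := by
  intro δ a n hn hδ₀ hδ₁ hla hδ_lower hδ_upper hAB
  have hmu : 0 < mu := hlam.trans hlammu
  have hla' : lam < a := hla.lt_of_ne fun h ↦ by
    rw [← h, div_self hlam.ne', one_pow] at hδ_lower; linarith
  have ha₀ : 0 < a := hlam.trans hla'
  have hABn : ‖A n - B n‖ ≤ lam ^ n := hAB.trans <| by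
    calc δ * a ^ n ≤ (lam / a) ^ n * a ^ n := by gcongr
      _ = lam ^ n := by rw [← mul_pow, div_mul_cancel₀ _ ha₀.ne']
  have hbound : (2 + (d : ℝ)) * C ^ 2 * (lam / mu) ^ n ≤
      (2 + (d : ℝ)) * C ^ 2 * (mu / lam) * δ ^ Real.logb (a / lam) (mu / lam) := by
    rw [mul_assoc _ (mu / lam)]
    gcongr
    exact div_pow_le_mul_rpow_logb hlam hlammu.le hla' hδ_lower.le
  rw [Real.log_div_log]
  refine subDist_le (by positivity) (fun v hv hv₁ ↦ ?_) (fun w hw hw₁ ↦ ?_)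
  · refine (infDist_le_of_exponential_splitting (A n) (B n) hFF'.codisjoint hlam.le hmu hC
      (hA₁ n hn) (hB₁ n hn) (hB₂ n hn) (fun v hv w hw ↦ (le_max_left _ _).trans (hangF v hv w hw))
      hABn hv).trans (by rw [hv₁, mul_one]; exact hbound)
  · refine (infDist_le_of_exponential_splitting (B n) (A n) hEE'.codisjoint hlam.le hmu hC
      (hB₁ n hn) (hA₁ n hn) (hA₂ n hn) (fun v hv w hw ↦ (le_max_left _ _).trans (hangE v hv w hw))
      (by rwa [norm_sub_rev]) hw).trans (by rw [hw₁, mul_one]; exact hbound)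

/-- Brin's lemma: let `(A_n)_{n≥1}` and `(B_n)_{n≥1}` be sequences of `d×d` matrices
(`d > 0`) such that for some `0 < λ < μ` and `C ≥ 1` there are splittings
`ℝ^d = E ⊕ E' = F ⊕ F'` with:
(1) `‖A_n u‖ ≤ Cλⁿ‖u‖` on `E` and `C⁻¹μⁿ‖v‖ ≤ ‖A_n v‖` on `E'`;
(2) `‖B_n u‖ ≤ Cλⁿ‖u‖` on `F` and `C⁻¹μⁿ‖v‖ ≤ ‖B_n v‖` on `F'`;
(3) `max{‖v‖,‖w‖} ≤ d‖v+w‖` for `v ∈ E, w ∈ E'` or `v ∈ F, w ∈ F'`.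
Then for each pair `(δ, a) ∈ (0,1] × [λ,∞)` with `(λ/a)^{n+1} < δ ≤ (λ/a)^n` and
`‖A_n − B_n‖ ≤ δaⁿ`, one has
`d(E, F) ≤ (2+d)·C²·(μ/λ)·δ^{log(μ/λ)/log(a/λ)}`. -/
theorem brin_subspace_distance {d : ℕ} (hd : 0 < d)
    (A B : ℕ → EuclideanSpace ℝ (Fin d) →L[ℝ] EuclideanSpace ℝ (Fin d))
    (lam mu C : ℝ) (hlam : 0 < lam) (hlammu : lam < mu) (hC : 1 ≤ C)
    (E E' F F' : Submodule ℝ (EuclideanSpace ℝ (Fin d)))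
    (hEE' : IsCompl E E') (hFF' : IsCompl F F')
    (hA₁ : ∀ n : ℕ, 1 ≤ n → ∀ u ∈ E, ‖A n u‖ ≤ C * lam ^ n * ‖u‖)
    (hA₂ : ∀ n : ℕ, 1 ≤ n → ∀ v ∈ E', C⁻¹ * mu ^ n * ‖v‖ ≤ ‖A n v‖)
    (hB₁ : ∀ n : ℕ, 1 ≤ n → ∀ u ∈ F, ‖B n u‖ ≤ C * lam ^ n * ‖u‖)
    (hB₂ : ∀ n : ℕ, 1 ≤ n → ∀ v ∈ F', C⁻¹ * mu ^ n * ‖v‖ ≤ ‖B n v‖)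
    (hangE : ∀ v ∈ E, ∀ w ∈ E', max ‖v‖ ‖w‖ ≤ (d : ℝ) * ‖v + w‖)
    (hangF : ∀ v ∈ F, ∀ w ∈ F', max ‖v‖ ‖w‖ ≤ (d : ℝ) * ‖v + w‖) :
    ∀ (δ a : ℝ) (n : ℕ), 1 ≤ n → 0 < δ → δ ≤ 1 → lam ≤ a →
      (lam / a) ^ (n + 1) < δ → δ ≤ (lam / a) ^ n →
      ‖A n - B n‖ ≤ δ * a ^ n →
      subDist E F ≤
        (2 + (d : ℝ)) * C ^ 2 * (mu / lam) *
          δ ^ (Real.log (mu / lam) / Real.log (a / lam)) :=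
  brin_subspace_distance_general A B lam mu C hlam hlammu hC E E' F F' hEE' hFF' hA₁ hA₂ hB₁ hB₂
    hangE hangF
end
end

section
/- Let E be an m-dimensional subspace of ℝ^d with orthonormal basis {v₁,…,v_m}, and let A be a real d×d matrix with A ≠ 0. Let G be the m×m Gram matrix with entries G_{ij} = ⟨A v_i, A v_j⟩, so that √(det G) = |det(A|E)| is the volume distortion of A restricted to E. Then for every v ∈ E with ‖v‖ = 1, ‖A v‖ ≥ ‖A‖^{1−m}·√(det G). Consequently, if A is injective on E, then ‖(A|E)^{−1}‖ ≤ ‖A‖^{m−1}/√(det G), where (A|E)^{−1}: A(E) → E is the inverse of the restriction of A to E. -/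
/-!
The Gram matrix `G` of `A v₁, …, A v_m` is positive semidefinite, and its quadratic form is
`c ⬝ G c = ‖A (∑ cᵢ vᵢ)‖² ≤ ‖A‖² ‖c‖²`. Hence its eigenvalues lie in `[0, ‖A‖²]`, and the smallest
one is at most the Rayleigh quotient `‖A u‖²` at the coordinates of a unit vector `u ∈ E`.
Bounding all other eigenvalues by `‖A‖²` gives `det G ≤ ‖A u‖² ‖A‖^{2(m-1)}`. If `A` is injective
on `E`, the vectors `A vᵢ` are linearly independent, so `det G > 0` and the bound can be inverted.
-/

namespace Matrix

variable {n : Type*} [Fintype n] [DecidableEq n] {H : Matrix n n ℝ}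

theorem IsHermitian.dotProduct_mulVec_eq_sum_eigenvalues (hH : H.IsHermitian) (x : n → ℝ) :
    x ⬝ᵥ H *ᵥ x = ∑ i, hH.eigenvalues i * (⇑(hH.eigenvectorBasis i) ⬝ᵥ x) ^ 2 := by
  set b := hH.eigenvectorBasis
  have hb (i : n) : ⇑(b i) ⬝ᵥ H *ᵥ x = hH.eigenvalues i * (⇑(b i) ⬝ᵥ x) := by
    rw [dotProduct_mulVec, ← mulVec_transpose, ← conjTranspose_eq_transpose_of_trivial, hH.eq,
      hH.mulVec_eigenvectorBasis, smul_dotProduct, smul_eq_mul]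
  have hparseval := b.sum_inner_mul_inner (WithLp.toLp 2 x) (WithLp.toLp 2 (H *ᵥ x))
  simp only [EuclideanSpace.inner_eq_star_dotProduct, star_trivial, dotProduct_comm (H *ᵥ x),
    hb] at hparseval
  rw [← hparseval]
  exact Finset.sum_congr rfl fun i _ => by ring

theorem IsHermitian.mul_dotProduct_le_dotProduct_mulVec (hH : H.IsHermitian) {c : ℝ}
    (hc : ∀ i, c ≤ hH.eigenvalues i) (x : n → ℝ) : c * (x ⬝ᵥ x) ≤ x ⬝ᵥ H *ᵥ x := by
  have hparseval := hH.eigenvectorBasis.sum_inner_mul_inner (WithLp.toLp 2 x) (WithLp.toLp 2 x)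
  simp only [EuclideanSpace.inner_eq_star_dotProduct, star_trivial, dotProduct_comm x] at hparseval
  rw [hH.dotProduct_mulVec_eq_sum_eigenvalues, ← hparseval, Finset.mul_sum]
  exact Finset.sum_le_sum fun i _ => by
    rw [← sq]; exact mul_le_mul_of_nonneg_right (hc i) (sq_nonneg _)

theorem IsHermitian.eigenvalues_le_of_forall_dotProduct_mulVec_le (hH : H.IsHermitian) {M : ℝ}
    (hM : ∀ x, x ⬝ᵥ H *ᵥ x ≤ M * (x ⬝ᵥ x)) (i : n) : hH.eigenvalues i ≤ M := by
  set b := hH.eigenvectorBasis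
  have hunit : ⇑(b i) ⬝ᵥ ⇑(b i) = 1 := by
    have h := EuclideanSpace.inner_eq_star_dotProduct (b i) (b i)
    rwa [real_inner_self_eq_norm_sq, b.orthonormal.1 i, one_pow, star_trivial, eq_comm] at h
  simpa [hH.eigenvalues_eq i, hunit] using hM (b i)

theorem PosSemidef.det_mul_dotProduct_le (hH : H.PosSemidef) {M : ℝ}
    (hM : ∀ x, x ⬝ᵥ H *ᵥ x ≤ M * (x ⬝ᵥ x)) (x : n → ℝ) :
    H.det * (x ⬝ᵥ x) ≤ M ^ (Fintype.card n - 1) * (x ⬝ᵥ H *ᵥ x) := by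
  cases isEmpty_or_nonempty n
  · simp [dotProduct]
  set μ := hH.1.eigenvalues
  obtain ⟨i₀, hi₀⟩ := Finite.exists_min μ
  have hμ_nonneg := hH.eigenvalues_nonneg
  have hμ_le := hH.1.eigenvalues_le_of_forall_dotProduct_mulVec_le hM
  have hprod : ∏ i ∈ Finset.univ.erase i₀, μ i ≤ M ^ (Fintype.card n - 1) := by
    simpa [Finset.card_erase_of_mem] using
      Finset.prod_le_prod (s := Finset.univ.erase i₀) (fun i _ => hμ_nonneg i) fun i _ => hμ_le i
  have hdet : H.det = μ i₀ * ∏ i ∈ Finset.univ.erase i₀, μ i := by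
    simp [hH.1.det_eq_prod_eigenvalues, μ, Finset.mul_prod_erase]
  calc H.det * (x ⬝ᵥ x) = (∏ i ∈ Finset.univ.erase i₀, μ i) * (μ i₀ * (x ⬝ᵥ x)) := by
        rw [hdet]; ring
    _ ≤ M ^ (Fintype.card n - 1) * (μ i₀ * (x ⬝ᵥ x)) :=
        mul_le_mul_of_nonneg_right hprod
          (mul_nonneg (hμ_nonneg i₀) (dotProduct_self_star_nonneg x))
    _ ≤ M ^ (Fintype.card n - 1) * (x ⬝ᵥ H *ᵥ x) :=
        mul_le_mul_of_nonneg_left (hH.1.mul_dotProduct_le_dotProduct_mulVec hi₀ x)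
          (pow_nonneg ((hμ_nonneg i₀).trans (hμ_le i₀)) _)

theorem dotProduct_gram_mulVec_self {ι E : Type*} [Fintype ι] [NormedAddCommGroup E]
    [InnerProductSpace ℝ E] (v : ι → E) (c : ι → ℝ) :
    c ⬝ᵥ gram ℝ v *ᵥ c = ‖∑ i, c i • v i‖ ^ 2 := by
  rw [← real_inner_self_eq_norm_sq, ← star_dotProduct_gram_mulVec, star_trivial]

end Matrix

namespace Orthonormal

open Matrix

variable {ι E F : Type*} [Fintype ι] [DecidableEq ι] [NormedAddCommGroup E]
  [InnerProductSpace ℝ E] [NormedAddCommGroup F] [InnerProductSpace ℝ F] {v : ι → E}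

theorem dotProduct_self_eq_norm_sq (hv : Orthonormal ℝ v) (c : ι → ℝ) :
    c ⬝ᵥ c = ‖∑ i, c i • v i‖ ^ 2 := by
  rw [← dotProduct_gram_mulVec_self, gram_eq_one_iff_orthonormal.2 hv, one_mulVec]

theorem det_gram_comp_mul_norm_sq_le (hv : Orthonormal ℝ v) (A : E →L[ℝ] F) {u : E}
    (hu : u ∈ Submodule.span ℝ (Set.range v)) :
    (gram ℝ (A ∘ v)).det * ‖u‖ ^ 2 ≤ (‖A‖ ^ 2) ^ (Fintype.card ι - 1) * ‖A u‖ ^ 2 := by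
  obtain ⟨c, rfl⟩ := (Submodule.mem_span_range_iff_exists_fun ℝ).1 hu
  have hquad (x : ι → ℝ) : x ⬝ᵥ gram ℝ (A ∘ v) *ᵥ x = ‖A (∑ i, x i • v i)‖ ^ 2 := by
    simp [dotProduct_gram_mulVec_self, map_sum, map_smul]
  have hbound (x : ι → ℝ) : x ⬝ᵥ gram ℝ (A ∘ v) *ᵥ x ≤ ‖A‖ ^ 2 * (x ⬝ᵥ x) := by
    rw [hquad, hv.dotProduct_self_eq_norm_sq, ← mul_pow]
    exact pow_le_pow_left₀ (norm_nonneg _) (A.le_opNorm _) 2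
  rw [← hv.dotProduct_self_eq_norm_sq, ← hquad]
  exact (posSemidef_gram ℝ (A ∘ v)).det_mul_dotProduct_le hbound c

theorem sqrt_det_gram_comp_mul_norm_le (hv : Orthonormal ℝ v) (A : E →L[ℝ] F) {u : E}
    (hu : u ∈ Submodule.span ℝ (Set.range v)) :
    √(gram ℝ (A ∘ v)).det * ‖u‖ ≤ ‖A‖ ^ (Fintype.card ι - 1) * ‖A u‖ := by
  have hdet := (posSemidef_gram ℝ (A ∘ v)).det_nonneg
  refine (pow_le_pow_iff_left₀ (by positivity) (by positivity) two_ne_zero).1 ?_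
  rw [mul_pow, mul_pow, Real.sq_sqrt hdet, pow_right_comm]
  exact hv.det_gram_comp_mul_norm_sq_le A hu

end Orthonormal

open Matrix in
/-- Let `E` be an `m`-dimensional subspace of `ℝ^d` with orthonormal basis `v₁, …, v_m`,
let `A ≠ 0` be a `d×d` matrix (as a linear operator of `ℝ^d`), and let `G` be the `m×m`
Gram matrix `G_{ij} = ⟨A vᵢ, A vⱼ⟩`, so that `√(det G) = |det(A|E)|` is the volume
distortion of `A` restricted to `E`.  Then `‖A u‖ ≥ ‖A‖^{1−m}·√(det G)` for every unit
vector `u ∈ E`; consequently, if `A` is injective on `E`, then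
`‖(A|E)^{−1}‖ ≤ ‖A‖^{m−1}/√(det G)`, i.e. `‖u‖ ≤ (‖A‖^{m−1}/√(det G))·‖A u‖`
for every `u ∈ E`. -/
theorem norm_apply_ge_of_orthonormal_basis {d m : ℕ}
    (E : Submodule ℝ (EuclideanSpace ℝ (Fin d)))
    (v : Fin m → EuclideanSpace ℝ (Fin d))
    (hon : Orthonormal ℝ v) (hspan : Submodule.span ℝ (Set.range v) = E)
    (A : EuclideanSpace ℝ (Fin d) →L[ℝ] EuclideanSpace ℝ (Fin d)) (hA : A ≠ 0)
    (G : Matrix (Fin m) (Fin m) ℝ)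
    (hG : ∀ i j, G i j = (inner ℝ (A (v i)) (A (v j)) : ℝ)) :
    (∀ u ∈ E, ‖u‖ = 1 →
        ‖A u‖ ≥ ‖A‖ ^ ((1 : ℝ) - (m : ℝ)) * Real.sqrt G.det) ∧
    ((∀ u ∈ E, A u = 0 → u = 0) →
      ∀ u ∈ E, ‖u‖ ≤ ‖A‖ ^ ((m : ℝ) - 1) / Real.sqrt G.det * ‖A u‖) := by
  obtain rfl : G = gram ℝ (A ∘ v) := Matrix.ext hG
  subst hspan
  have hApos : 0 < ‖A‖ := norm_pos_iff.2 hA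
  have hlower : ∀ u ∈ Submodule.span ℝ (Set.range v), u ≠ 0 →
      ‖A‖ ^ ((1 : ℝ) - m) * √(gram ℝ (A ∘ v)).det * ‖u‖ ≤ ‖A u‖ := by
    intro u hu hu0
    obtain ⟨k, rfl⟩ : ∃ k, m = k + 1 :=
      Nat.exists_eq_succ_of_ne_zero (by rintro rfl; simp_all)
    have h := hon.sqrt_det_gram_comp_mul_norm_le A hu
    rw [Fintype.card_fin, Nat.add_sub_cancel] at h
    rwa [Nat.cast_succ, show (1 : ℝ) - (k + 1) = -k by ring, Real.rpow_neg hApos.le,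
      Real.rpow_natCast, mul_assoc, inv_mul_le_iff₀ (by positivity)]
  refine ⟨fun u hu hu1 => ?_, fun hinj u hu => ?_⟩
  · simpa [hu1] using hlower u hu (norm_ne_zero_iff.1 (by simp [hu1]))
  · rcases eq_or_ne u 0 with rfl | hu0
    · simp
    have hli : LinearIndependent ℝ (A ∘ v) :=
      hon.linearIndependent.map (f := A.toLinearMap) (Submodule.disjoint_def.2 hinj)
    have hdet := (posDef_gram_of_linearIndependent hli).det_pos
    rw [show (m : ℝ) - 1 = -((1 : ℝ) - m) by ring, Real.rpow_neg hApos.le, div_eq_mul_inv,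
      ← mul_inv, le_inv_mul_iff₀ (by positivity)]
    exact hlower u hu hu0
end
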